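/- arXiv:1203.3238 — 2 statements merged into one kernel-verified Lean document; each statement's English description precedes it below -/
import Mathlib

section
/- Let q₁, …, q_k be odd positive integers. Then there exists an odd positive integer q such that for every subset T ⊆ {1, …, k}, the integer (q² + 1) · ∏_{i ∈ T} (q_i² + 1) is not a perfect square. (This expresses that the class of q² + 1 in the group of positive rationals modulo squares does not lie in the subgroup generated by the classes of the q_i² + 1.) -/
/-!
Choose a prime `p ≡ 1 (mod 4)` larger than every `qᵢ² + 1`. Since `-1` is a square modulo `p`,
there is an odd `q < p` with `p ∣ q² + 1`, and then `q² + 1 < p²`. So `p` divides `q² + 1`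
exactly once and divides none of the `qᵢ² + 1`: the `p`-adic valuation of
`(q² + 1) · ∏_{i ∈ T} (qᵢ² + 1)` is `1`, so it is not a square.
-/

theorem Nat.Prime.not_isSquare_mul {p a b : ℕ} (hp : p.Prime) (hpa : p ∣ a)
    (hpa2 : ¬ p ^ 2 ∣ a) (hpb : ¬ p ∣ b) : ¬ IsSquare (a * b) := by
  rintro ⟨r, hr⟩
  have hpr : p ∣ r := by
    rcases hp.dvd_mul.mp (hr ▸ dvd_mul_of_dvd_left hpa b) with h | h <;> exact h
  have hp2 : p ^ 2 ∣ a * b := hr ▸ pow_two p ▸ mul_dvd_mul hpr hpr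
  exact hpa2 ((Nat.Coprime.pow_left 2 (hp.coprime_iff_not_dvd.mpr hpb)).dvd_of_dvd_mul_right hp2)

theorem Nat.Prime.exists_odd_lt_dvd_sq_add_one {p : ℕ} (hp : p.Prime) (hp4 : p % 4 = 1) :
    ∃ q, Odd q ∧ q < p ∧ p ∣ q ^ 2 + 1 := by
  have : Fact p.Prime := ⟨hp⟩
  obtain ⟨z, hz⟩ : IsSquare (-1 : ZMod p) := ZMod.exists_sq_eq_neg_one_iff.mpr (by omega)
  have hroot (x : ZMod p) (hx : x ^ 2 = -1) : p ∣ x.val ^ 2 + 1 := by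
    rw [← ZMod.natCast_eq_zero_iff]
    push_cast
    rw [ZMod.natCast_zmod_val, hx, neg_add_cancel]
  have hz2 : z ^ 2 = -1 := by rw [hz, pow_two]
  have hz0 : z ≠ 0 := by rintro rfl; simp at hz
  -- `z.val + (-z).val = p` is odd, so one of the two square roots of `-1` has an odd value.
  have hsum : z.val + (-z).val = p := by
    rw [ZMod.neg_val, if_neg hz0]
    have := ZMod.val_lt z
    omega
  have hpodd : Odd p := Nat.odd_iff.mpr (by omega)
  by_cases hzodd : Odd z.val
  · exact ⟨z.val, hzodd, ZMod.val_lt z, hroot z hz2⟩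
  · refine ⟨(-z).val, ?_, ZMod.val_lt _, hroot (-z) (by rw [neg_sq, hz2])⟩
    rw [← hsum] at hpodd
    exact (Nat.odd_add'.mp hpodd).mpr (Nat.not_odd_iff_even.mp hzodd)

theorem stmt6_general (k : ℕ) (qs : Fin k → ℕ) :
    ∃ q : ℕ, Odd q ∧ 0 < q ∧
      ∀ T : Finset (Fin k), ¬ IsSquare ((q ^ 2 + 1) * ∏ i ∈ T, (qs i ^ 2 + 1)) := by
  obtain ⟨p, hp, hpN, hp4⟩ :=
    Nat.exists_prime_gt_modEq_one (Finset.univ.sup fun i => qs i ^ 2 + 1) four_ne_zero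
  obtain ⟨q, hq, hqp, hpq⟩ := hp.exists_odd_lt_dvd_sq_add_one hp4
  have hq_lt : q ^ 2 + 1 < p ^ 2 := by nlinarith [hq.pos]
  have hp_not_dvd (i : Fin k) : ¬ p ∣ qs i ^ 2 + 1 := fun h => by
    have := Finset.le_sup (f := fun i => qs i ^ 2 + 1) (Finset.mem_univ i)
    have := Nat.le_of_dvd (by positivity) h
    omega
  refine ⟨q, hq, hq.pos, fun T => hp.not_isSquare_mul hpq ?_ ?_⟩
  · exact fun h => (Nat.le_of_dvd (by positivity) h).not_gt hq_lt
  · rw [(Nat.prime_iff.mp hp).dvd_finsetProd_iff]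
    exact fun ⟨i, _, hi⟩ => hp_not_dvd i hi

/-- Let `q₁, …, q_k` be odd positive integers.  Then there is an odd positive integer
`q` such that for every subset `T ⊆ {1, …, k}` the number
`(q² + 1) · ∏_{i ∈ T} (q_i² + 1)` is not a perfect square; i.e. the class of `q² + 1`
modulo squares lies outside the subgroup generated by the classes of the `q_i² + 1`. -/
theorem stmt6 (k : ℕ) (qs : Fin k → ℕ) (hodd : ∀ i, Odd (qs i)) (hpos : ∀ i, 0 < qs i) :
    ∃ q : ℕ, Odd q ∧ 0 < q ∧
      ∀ T : Finset (Fin k), ¬ IsSquare ((q ^ 2 + 1) * ∏ i ∈ T, (qs i ^ 2 + 1)) :=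
  stmt6_general k qs
end

section
/- In the quotient of the multiplicative group of nonzero rationals ℚˣ by its subgroup of squares (ℚˣ)², the subgroup generated by the images of the integers q² + 1, as q ranges over all odd positive integers, is not finitely generated (equivalently, it is an infinite subgroup in which every element has order dividing 2). -/
/-!
The class of a nonzero rational modulo squares determines the parity of each of its `p`-adic
valuations. A finitely generated subgroup of `ℚˣ/(ℚˣ)²` has generators involving only finitely
many primes, so for a large prime `p ≡ 1 (mod 4)` the `p`-adic parity vanishes on it. But `-1`
is a square modulo such a `p`, and adjusting a square root of `-1` by multiples of `p` and `p²`
yields an odd `q` with `v_p(q² + 1) = 1`.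
-/

open Multiplicative

lemma dvd_add_sq_add_one_iff {d m b : ℕ} (h : d ∣ m) : d ∣ (b + m) ^ 2 + 1 ↔ d ∣ b ^ 2 + 1 := by
  rw [show (b + m) ^ 2 + 1 = b ^ 2 + 1 + m * (2 * b + m) by ring]
  exact Nat.dvd_add_left (dvd_mul_of_dvd_left h _)

lemma Nat.Prime.exists_dvd_sq_add_one {p : ℕ} (hp : p.Prime) (hp4 : p % 4 ≠ 3) :
    ∃ a : ℕ, p ∣ a ^ 2 + 1 := by
  have := Fact.mk hp
  obtain ⟨y, hy⟩ := ZMod.exists_sq_eq_neg_one_iff.mpr hp4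
  refine ⟨y.val, (ZMod.natCast_eq_zero_iff _ _).mp ?_⟩
  push_cast
  rw [ZMod.natCast_zmod_val, sq, ← hy, neg_add_cancel]

lemma Nat.Prime.exists_dvd_sq_add_one_not_sq_dvd {p a : ℕ} (hp : p.Prime) (hp2 : p ≠ 2)
    (ha : p ∣ a ^ 2 + 1) : ∃ b : ℕ, p ∣ b ^ 2 + 1 ∧ ¬ p ^ 2 ∣ b ^ 2 + 1 := by
  by_cases ha2 : p ^ 2 ∣ a ^ 2 + 1
  · refine ⟨a + p, (dvd_add_sq_add_one_iff dvd_rfl).mpr ha, fun hap2 => ?_⟩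
    -- `(a + p)² + 1 ≡ 2ap (mod p²)` forces `p ∣ 2a`, hence `p ∣ a`, incompatible with `p ∣ a² + 1`.
    rw [show (a + p) ^ 2 + 1 = a ^ 2 + 1 + p * (2 * a + p) by ring, Nat.dvd_add_right ha2, sq,
      Nat.mul_dvd_mul_iff_left hp.pos, Nat.dvd_add_left dvd_rfl] at hap2
    have hpa : p ∣ a := (hp.dvd_mul.mp hap2).resolve_left
      fun h => hp2 ((Nat.prime_dvd_prime_iff_eq hp Nat.prime_two).mp h)
    exact hp.not_dvd_one ((Nat.dvd_add_right (dvd_pow hpa two_ne_zero)).mp ha)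
  · exact ⟨a, ha, ha2⟩

lemma Nat.Prime.exists_odd_dvd_sq_add_one_not_sq_dvd {p : ℕ} (hp : p.Prime) (hp4 : p % 4 = 1) :
    ∃ q : ℕ, Odd q ∧ p ∣ q ^ 2 + 1 ∧ ¬ p ^ 2 ∣ q ^ 2 + 1 := by
  have hp2 : p ≠ 2 := by rintro rfl; simp at hp4
  obtain ⟨a, ha⟩ := hp.exists_dvd_sq_add_one (by omega)
  obtain ⟨b, hb, hb2⟩ := hp.exists_dvd_sq_add_one_not_sq_dvd hp2 ha
  rcases Nat.even_or_odd b with hb_even | hb_odd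
  · refine ⟨b + p ^ 2, hb_even.add_odd (hp.odd_of_ne_two hp2).pow, ?_, ?_⟩
    · exact (dvd_add_sq_add_one_iff (dvd_pow_self p two_ne_zero)).mpr hb
    · rwa [dvd_add_sq_add_one_iff dvd_rfl]
  · exact ⟨b, hb_odd, hb, hb2⟩

lemma padicValNat_eq_one_of_not_sq_dvd {p n : ℕ} [Fact p.Prime] (h : p ∣ n) (h2 : ¬ p ^ 2 ∣ n) :
    padicValNat p n = 1 := by
  have hn : n ≠ 0 := by rintro rfl; exact h2 (dvd_zero _)
  rw [← pow_one p, padicValNat_dvd_iff_le hn] at h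
  rw [padicValNat_dvd_iff_le hn] at h2
  omega

lemma padicValRat_eq_zero_of_num_natAbs_add_den_lt {p : ℕ} {r : ℚ}
    (h : r.num.natAbs + r.den < p) : padicValRat p r = 0 := by
  have hnum : padicValNat p r.num.natAbs = 0 :=
    padicValNat.eq_zero_iff.mpr <| Or.inr <| (eq_or_ne r.num.natAbs 0).imp_right
      fun hne => Nat.not_dvd_of_pos_of_lt (Nat.pos_of_ne_zero hne) (by omega)
  have hden : padicValNat p r.den = 0 :=
    padicValNat.eq_zero_of_not_dvd (Nat.not_dvd_of_pos_of_lt r.den_pos (by omega))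
  rw [padicValRat_def, padicValInt, hnum, hden, Nat.cast_zero, sub_zero]

section PadicParity

variable (p : ℕ) [Fact p.Prime]

def padicValRatParity : ℚˣ →* Multiplicative (ZMod 2) where
  toFun u := ofAdd (padicValRat p u : ZMod 2)
  map_one' := by simp
  map_mul' u v := by
    rw [← ofAdd_add, Units.val_mul, padicValRat.mul u.ne_zero v.ne_zero, Int.cast_add]

variable {p}

lemma padicValRatParity_eq_one_iff {u : ℚˣ} :
    padicValRatParity p u = 1 ↔ Even (padicValRat p u) := by
  rw [← ZMod.intCast_eq_zero_iff_even, ← ofAdd_eq_one]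
  rfl

lemma range_powMonoidHom_two_le_ker_padicValRatParity :
    (powMonoidHom 2 : ℚˣ →* ℚˣ).range ≤ (padicValRatParity p).ker := by
  rintro _ ⟨v, rfl⟩
  rw [MonoidHom.mem_ker, padicValRatParity_eq_one_iff, powMonoidHom_apply,
    Units.val_pow_eq_pow_val, padicValRat.pow]
  exact even_two_mul _

variable (p)

def squareClassPadicParity :
    ℚˣ ⧸ (powMonoidHom 2 : ℚˣ →* ℚˣ).range →* Multiplicative (ZMod 2) :=
  QuotientGroup.lift _ (padicValRatParity p) range_powMonoidHom_two_le_ker_padicValRatParity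

variable {p}

lemma squareClassPadicParity_mk (u : ℚˣ) :
    squareClassPadicParity p (QuotientGroup.mk u) = padicValRatParity p u :=
  rfl

end PadicParity

/-- In `ℚˣ/(ℚˣ)²` (the quotient of the multiplicative group of nonzero rationals by its
subgroup of squares, i.e. the range of the squaring homomorphism), the subgroup
generated by the classes of the integers `q² + 1`, as `q` ranges over all odd positive
natural numbers, is not finitely generated. -/
theorem stmt7 :
    ¬ Subgroup.FG (Subgroup.closure
      {x : ℚˣ ⧸ (powMonoidHom 2 : ℚˣ →* ℚˣ).range |
        ∃ q : ℕ, Odd q ∧ 0 < q ∧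
          x = QuotientGroup.mk (Units.mk0 ((q : ℚ) ^ 2 + 1) (by positivity))}) := by
  rintro ⟨T, hT⟩
  set N := T.sup fun x => ((x.out : ℚˣ) : ℚ).num.natAbs + ((x.out : ℚˣ) : ℚ).den
  obtain ⟨p, hp, hNp, hp4⟩ := Nat.exists_prime_gt_modEq_one N four_ne_zero
  have := Fact.mk hp
  obtain ⟨q, hq, hpq, hpq2⟩ := hp.exists_odd_dvd_sq_add_one_not_sq_dvd hp4
  have hT_ker : Subgroup.closure (T : Set _) ≤ (squareClassPadicParity p).ker := by
    refine (Subgroup.closure_le _).mpr fun x hx => ?_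
    rw [SetLike.mem_coe, MonoidHom.mem_ker, ← QuotientGroup.out_eq' x, squareClassPadicParity_mk,
      padicValRatParity_eq_one_iff, padicValRat_eq_zero_of_num_natAbs_add_den_lt
        ((Finset.le_sup hx).trans_lt hNp)]
    exact Even.zero
  have hq_mem := (hT ▸ hT_ker) (Subgroup.subset_closure ⟨q, hq, hq.pos, rfl⟩)
  rw [MonoidHom.mem_ker, squareClassPadicParity_mk, padicValRatParity_eq_one_iff, Units.val_mk0,
    show (q : ℚ) ^ 2 + 1 = ((q ^ 2 + 1 : ℕ) : ℚ) by push_cast; rfl, ← padicValRat_of_nat,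
    Int.even_coe_nat, padicValNat_eq_one_of_not_sq_dvd hpq hpq2] at hq_mem
  exact Nat.not_even_one hq_mem
end
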